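/- Let n ≥ 1, let y₁,…,yₙ ∈ (0,1), and let λ ∈ (0,1). Then there exists a unique θ* > 0 such that ψ(θ*) = 0; that is, the likelihood equation for the shape parameter θ of the GTLD (with α, β, λ known) has a unique solution on (0,∞). -/
import Mathlib


open Real Filter

/-- The profile score function for the shape parameter `θ` of the GTLD:
`ψ(θ) = n/θ + Σᵢ log yᵢ − 2λ Σᵢ yᵢ^θ log yᵢ/(1 + λ − 2λ yᵢ^θ)`. -/
noncomputable def psi (n : ℕ) (y : Fin n → ℝ) (lam : ℝ) (θ : ℝ) : ℝ :=
  (n : ℝ) / θ + ∑ i, Real.log (y i) -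
    2 * lam * ∑ i, (y i) ^ θ * Real.log (y i) / (1 + lam - 2 * lam * (y i) ^ θ)

section aux

variable {n : ℕ} {y : Fin n → ℝ} {lam : ℝ}

lemma denom_pos (hlam : lam ∈ Set.Ioo (0 : ℝ) 1) {t : ℝ} (ht : t < 1) :
    0 < 1 + lam - 2 * lam * t := by
  nlinarith [hlam.1, hlam.2]

lemma rpow_mem {u : ℝ} (hy : u ∈ Set.Ioo (0:ℝ) 1) {θ : ℝ} (hθ : 0 < θ) :
    u ^ θ ∈ Set.Ioo (0:ℝ) 1 :=
  ⟨Real.rpow_pos_of_pos hy.1 θ, Real.rpow_lt_one hy.1.le hy.2 hθ⟩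

/-- The per-index term `y^θ log y / (1+λ−2λ y^θ)` is monotone in `θ`. -/
lemma term_mono {u : ℝ} (hy : u ∈ Set.Ioo (0:ℝ) 1) (hlam : lam ∈ Set.Ioo (0:ℝ) 1)
    {a b : ℝ} (ha : 0 < a) (hab : a < b) :
    u ^ a * Real.log u / (1 + lam - 2 * lam * u ^ a) ≤
      u ^ b * Real.log u / (1 + lam - 2 * lam * u ^ b) := by
  have hta := rpow_mem hy ha
  have htb := rpow_mem hy (ha.trans hab)
  have hDa := denom_pos hlam hta.2
  have hDb := denom_pos hlam htb.2
  have htba : u ^ b < u ^ a :=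
    Real.rpow_lt_rpow_of_exponent_gt hy.1 hy.2 hab
  have hL : Real.log u ≤ 0 := Real.log_nonpos hy.1.le hy.2.le
  have hdiv : u ^ b / (1 + lam - 2 * lam * u ^ b) ≤
      u ^ a / (1 + lam - 2 * lam * u ^ a) := by
    rw [div_le_div_iff₀ hDb hDa]
    nlinarith [hlam.1]
  calc u ^ a * Real.log u / (1 + lam - 2 * lam * u ^ a)
      = Real.log u * (u ^ a / (1 + lam - 2 * lam * u ^ a)) := by ring
    _ ≤ Real.log u * (u ^ b / (1 + lam - 2 * lam * u ^ b)) :=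
        mul_le_mul_of_nonpos_left hdiv hL
    _ = u ^ b * Real.log u / (1 + lam - 2 * lam * u ^ b) := by ring

lemma psi_strictAntiOn (hy : ∀ i, y i ∈ Set.Ioo (0:ℝ) 1)
    (hlam : lam ∈ Set.Ioo (0:ℝ) 1) (hn : 1 ≤ n) :
    StrictAntiOn (psi n y lam) (Set.Ioi 0) := by
  intro a ha b hb hab
  have hnpos : (0:ℝ) < n := by exact_mod_cast hn
  have hdiv : (n:ℝ) / b < (n:ℝ) / a := div_lt_div_of_pos_left hnpos ha hab
  have hsum : ∑ i, (y i) ^ a * Real.log (y i) / (1 + lam - 2 * lam * (y i) ^ a) ≤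
      ∑ i, (y i) ^ b * Real.log (y i) / (1 + lam - 2 * lam * (y i) ^ b) :=
    Finset.sum_le_sum fun i _ => term_mono (hy i) hlam ha hab
  have h2 : 2 * lam * ∑ i, (y i) ^ a * Real.log (y i) / (1 + lam - 2 * lam * (y i) ^ a) ≤
      2 * lam * ∑ i, (y i) ^ b * Real.log (y i) / (1 + lam - 2 * lam * (y i) ^ b) :=
    mul_le_mul_of_nonneg_left hsum (by linarith [hlam.1])
  simp only [psi]
  linarith

lemma psi_continuousOn (hy : ∀ i, y i ∈ Set.Ioo (0:ℝ) 1)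
    (hlam : lam ∈ Set.Ioo (0:ℝ) 1) :
    ContinuousOn (psi n y lam) (Set.Ioi 0) := by
  have hc : ∀ i : Fin n, Continuous fun θ : ℝ => (y i) ^ θ := fun i =>
    continuous_const.rpow continuous_id fun x => Or.inl (ne_of_gt (hy i).1)
  refine ContinuousOn.sub (ContinuousOn.add ?_ continuousOn_const) ?_
  · exact continuousOn_const.div continuousOn_id fun x hx => ne_of_gt hx
  · refine continuousOn_const.mul (continuousOn_finset_sum _ fun i _ => ?_)
    refine (((hc i).mul continuous_const).continuousOn).div
      ((continuous_const.sub (continuous_const.mul (hc i))).continuousOn) ?_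
    intro θ hθ
    exact ne_of_gt (denom_pos hlam (rpow_mem (hy i) hθ).2)

end aux

/-- Uniqueness of the MLE for `θ` when `λ ∈ (0,1)`: the likelihood equation
`ψ(θ) = 0` has a unique solution on `(0,∞)`. -/
theorem gtld_mle_unique (n : ℕ) (hn : 1 ≤ n) (y : Fin n → ℝ)
    (hy : ∀ i, y i ∈ Set.Ioo (0 : ℝ) 1) (lam : ℝ)
    (hlam : lam ∈ Set.Ioo (0 : ℝ) 1) :
    ∃! θ : ℝ, 0 < θ ∧ psi n y lam θ = 0 := by
  have hnpos : (0:ℝ) < n := by exact_mod_cast hn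
  set S : ℝ := ∑ i, Real.log (y i) with hS
  have hne : (Finset.univ : Finset (Fin n)).Nonempty := by
    have : Nonempty (Fin n) := Fin.pos_iff_nonempty.mp hn
    exact Finset.univ_nonempty
  have hSneg : S < 0 :=
    Finset.sum_neg (fun i _ => Real.log_neg (hy i).1 (hy i).2) hne
  -- lower bound : psi θ ≥ n/θ + S for θ > 0
  have hlow : ∀ θ : ℝ, 0 < θ → (n:ℝ) / θ + S ≤ psi n y lam θ := by
    intro θ hθ
    have hsum : ∑ i, (y i) ^ θ * Real.log (y i) / (1 + lam - 2 * lam * (y i) ^ θ) ≤ 0 := by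
      refine Finset.sum_nonpos fun i _ => ?_
      have ht := rpow_mem (hy i) hθ
      exact div_nonpos_of_nonpos_of_nonneg
        (mul_nonpos_of_nonneg_of_nonpos ht.1.le
          (Real.log_nonpos (hy i).1.le (hy i).2.le))
        (denom_pos hlam ht.2).le
    have : 2 * lam * ∑ i, (y i) ^ θ * Real.log (y i) / (1 + lam - 2 * lam * (y i) ^ θ) ≤ 0 :=
      mul_nonpos_of_nonneg_of_nonpos (by linarith [hlam.1]) hsum
    simp only [psi]
    linarith
  -- upper bound : psi θ ≤ n/θ + S + 2λ Σ y^θ(−log y)/(1−λ)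
  have hup : ∀ θ : ℝ, 0 < θ → psi n y lam θ ≤
      (n:ℝ) / θ + S + 2 * lam * ∑ i, (y i) ^ θ * (-Real.log (y i)) / (1 - lam) := by
    intro θ hθ
    have hsum : ∑ i, -((y i) ^ θ * Real.log (y i) / (1 + lam - 2 * lam * (y i) ^ θ)) ≤
        ∑ i, (y i) ^ θ * (-Real.log (y i)) / (1 - lam) := by
      refine Finset.sum_le_sum fun i _ => ?_
      have ht := rpow_mem (hy i) hθ
      have hD := denom_pos hlam ht.2
      have hnum : 0 ≤ (y i) ^ θ * (-Real.log (y i)) :=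
        mul_nonneg ht.1.le (by linarith [Real.log_nonpos (hy i).1.le (hy i).2.le])
      have h1 : (y i) ^ θ * (-Real.log (y i)) / (1 + lam - 2 * lam * (y i) ^ θ) ≤
          (y i) ^ θ * (-Real.log (y i)) / (1 - lam) := by
        apply div_le_div_of_nonneg_left hnum (by linarith [hlam.2])
        nlinarith [hlam.1, ht.2]
      calc -((y i) ^ θ * Real.log (y i) / (1 + lam - 2 * lam * (y i) ^ θ))
          = (y i) ^ θ * (-Real.log (y i)) / (1 + lam - 2 * lam * (y i) ^ θ) := by ring
        _ ≤ (y i) ^ θ * (-Real.log (y i)) / (1 - lam) := h1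
    rw [Finset.sum_neg_distrib] at hsum
    have h2 : -(2 * lam * ∑ i, (y i) ^ θ * Real.log (y i) / (1 + lam - 2 * lam * (y i) ^ θ)) ≤
        2 * lam * ∑ i, (y i) ^ θ * (-Real.log (y i)) / (1 - lam) := by
      have := mul_le_mul_of_nonneg_left hsum (show (0:ℝ) ≤ 2 * lam by linarith [hlam.1])
      linarith
    simp only [psi]
    linarith
  -- choose θ₀ with psi θ₀ > 0
  set θ₀ : ℝ := (n:ℝ) / (1 - S) with hθ₀def
  have h1S : (0:ℝ) < 1 - S := by linarith
  have hθ₀pos : 0 < θ₀ := div_pos hnpos h1S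
  have hpsi₀ : 0 < psi n y lam θ₀ := by
    have := hlow θ₀ hθ₀pos
    have hq : (n:ℝ) / θ₀ = 1 - S := by
      rw [hθ₀def, div_div_eq_mul_div]
      field_simp
    rw [hq] at this
    linarith
  -- find θ₁ > θ₀ with psi θ₁ < 0, using limits
  have hF : Tendsto (fun θ : ℝ => (n:ℝ) / θ + S +
      2 * lam * ∑ i, (y i) ^ θ * (-Real.log (y i)) / (1 - lam)) atTop (nhds (0 + S + 2 * lam * ∑ i : Fin n, (0:ℝ))) := by
    refine Tendsto.add (Tendsto.add ?_ tendsto_const_nhds) ?_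
    · exact tendsto_const_nhds.div_atTop tendsto_id
    · refine Tendsto.const_mul _ (tendsto_finset_sum _ fun i _ => ?_)
      have h0 : Tendsto (fun θ : ℝ => (y i) ^ θ) atTop (nhds 0) :=
        tendsto_rpow_atTop_of_base_lt_one _ (by linarith [(hy i).1]) (hy i).2
      have : Tendsto (fun θ : ℝ => (y i) ^ θ * (-Real.log (y i)) / (1 - lam)) atTop
          (nhds (0 * (-Real.log (y i)) / (1 - lam))) :=
        (h0.mul tendsto_const_nhds).div_const _
      simpa using this
  have hFev : ∀ᶠ θ in atTop, (n:ℝ) / θ + S +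
      2 * lam * ∑ i, (y i) ^ θ * (-Real.log (y i)) / (1 - lam) < 0 := by
    refine hF.eventually_lt_const ?_
    simp only [Finset.sum_const, smul_zero, mul_zero, add_zero, zero_add]
    exact hSneg
  obtain ⟨a, ha⟩ := hFev.exists_forall_of_atTop
  set θ₁ : ℝ := max a (θ₀ + 1) with hθ₁def
  have hθ₁pos : 0 < θ₁ := lt_of_lt_of_le (by linarith) (le_max_right _ _)
  have hθ₀₁ : θ₀ < θ₁ := lt_of_lt_of_le (by linarith) (le_max_right _ _)
  have hpsi₁ : psi n y lam θ₁ < 0 := by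
    have := hup θ₁ hθ₁pos
    have h2 := ha θ₁ (le_max_left _ _)
    linarith
  -- IVT on [θ₀, θ₁]
  have hsub : Set.Icc θ₀ θ₁ ⊆ Set.Ioi 0 := fun x hx => lt_of_lt_of_le hθ₀pos hx.1
  have hIVT : (0:ℝ) ∈ psi n y lam '' Set.Icc θ₀ θ₁ :=
    intermediate_value_Icc' hθ₀₁.le ((psi_continuousOn hy hlam).mono hsub)
      ⟨hpsi₁.le, hpsi₀.le⟩
  obtain ⟨θs, hθs, hθsz⟩ := hIVT
  have hθspos : 0 < θs := hsub hθs
  refine ⟨θs, ⟨hθspos, hθsz⟩, ?_⟩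
  rintro θ' ⟨hθ'pos, hθ'z⟩
  exact (psi_strictAntiOn hy hlam hn).injOn hθ'pos hθspos (by rw [hθ'z, hθsz])
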